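/- arXiv:2509.18747 — 2 statements merged into one kernel-verified Lean document; each statement's English description precedes it below -/
import Mathlib

section
/- The function Φ, defined by Φ(x) = ln((e^x − 1)/x) for x ≠ 0 and Φ(0) = 0, is monotone nondecreasing on ℝ. -/
/- Writing `(e^x - 1)/x = ∫₀¹ e^{tx} dt` covers `x = 0` too, where both sides of `Φ = log (…)` are `0`.
Each integrand `x ↦ e^{tx}` with `t ≥ 0` is nondecreasing and positive, so the integral is a positive
nondecreasing function of `x`, and so is its logarithm. -/

noncomputable def Phi (x : ℝ) : ℝ := if x = 0 then 0 else Real.log ((Real.exp x - 1) / x)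

open intervalIntegral MeasureTheory

noncomputable def expMean (x : ℝ) : ℝ := ∫ t in (0 : ℝ)..1, Real.exp (t * x)

lemma intervalIntegrable_exp_mul (x a b : ℝ) :
    IntervalIntegrable (fun t => Real.exp (t * x)) volume a b :=
  (by fun_prop : Continuous fun t => Real.exp (t * x)).intervalIntegrable a b

lemma expMean_pos (x : ℝ) : 0 < expMean x :=
  intervalIntegral_pos_of_pos (intervalIntegrable_exp_mul x 0 1) (fun _ => Real.exp_pos _) one_pos

lemma expMean_monotone : Monotone expMean := fun x y hxy =>
  integral_mono_on zero_le_one (intervalIntegrable_exp_mul x 0 1) (intervalIntegrable_exp_mul y 0 1)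
    fun _ ht => Real.exp_le_exp.mpr (mul_le_mul_of_nonneg_left hxy ht.1)

lemma expMean_zero : expMean 0 = 1 := by
  simp [expMean]

lemma expMean_eq_div {x : ℝ} (hx : x ≠ 0) : expMean x = (Real.exp x - 1) / x := by
  rw [expMean, integral_comp_mul_right (fun u => Real.exp u) hx]
  simp [integral_exp, div_eq_inv_mul]

lemma Phi_eq_log_expMean (x : ℝ) : Phi x = Real.log (expMean x) := by
  by_cases hx : x = 0
  · simp [Phi, hx, expMean_zero]
  · simp [Phi, hx, expMean_eq_div hx]

theorem Phi_monotone : Monotone Phi := fun x y hxy => by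
  rw [Phi_eq_log_expMean, Phi_eq_log_expMean]
  exact Real.log_le_log (expMean_pos x) (expMean_monotone hxy)
end

section
/- For all x ≠ 0, the second derivative of Φ at x equals (e^{2x} − (2 + x²)·e^x + 1) / (x²·(e^x − 1)²), and this quantity is strictly positive; in particular Φ is strictly convex on each of (−∞, 0) and (0, ∞). -/
open Real Filter Topology

lemma exp_sub_one_ne_zero {x : ℝ} (hx : x ≠ 0) : exp x - 1 ≠ 0 :=
  sub_ne_zero.mpr (exp_eq_one_iff x |>.not.mpr hx)

lemma exp_sub_one_eq_two_mul_sinh_half_mul_exp_half (x : ℝ) :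
    exp x - 1 = 2 * sinh (x / 2) * exp (x / 2) := by
  have hmul : exp (-(x / 2)) * exp (x / 2) = 1 := by rw [← exp_add]; simp
  have hsq : exp (x / 2) * exp (x / 2) = exp x := by rw [← exp_add]; ring_nf
  rw [sinh_eq]
  linear_combination hmul - hsq

lemma sq_mul_exp_lt_exp_sub_one_sq {x : ℝ} (hx : x ≠ 0) : x ^ 2 * exp x < (exp x - 1) ^ 2 := by
  have hsinh : (x / 2) ^ 2 < sinh (x / 2) ^ 2 := by
    rw [sq_lt_sq, abs_sinh, self_lt_sinh_iff]
    positivity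
  have hexp : exp (x / 2) ^ 2 = exp x := by rw [← exp_nat_mul]; ring_nf
  calc x ^ 2 * exp x = 4 * (x / 2) ^ 2 * exp x := by ring
    _ < 4 * sinh (x / 2) ^ 2 * exp x := by gcongr
    _ = (exp x - 1) ^ 2 := by rw [exp_sub_one_eq_two_mul_sinh_half_mul_exp_half, ← hexp]; ring

lemma Phi_eventuallyEq {x : ℝ} (hx : x ≠ 0) :
    Phi =ᶠ[𝓝 x] fun y => log ((exp y - 1) / y) := by
  filter_upwards [isOpen_ne.mem_nhds hx] with y hy
  simp [Phi, hy]

lemma hasDerivAt_Phi {x : ℝ} (hx : x ≠ 0) :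
    HasDerivAt Phi (exp x / (exp x - 1) - 1 / x) x := by
  have hne := exp_sub_one_ne_zero hx
  have hquot := ((hasDerivAt_exp x).sub_const 1).div (hasDerivAt_id x) hx
  refine ((hquot.log (div_ne_zero hne hx)).congr_of_eventuallyEq (Phi_eventuallyEq hx)).congr_deriv ?_
  simp only [Pi.div_apply, id]
  field_simp

lemma hasDerivAt_deriv_Phi {x : ℝ} (hx : x ≠ 0) :
    HasDerivAt (deriv Phi)
      ((exp (2 * x) - (2 + x ^ 2) * exp x + 1) / (x ^ 2 * (exp x - 1) ^ 2)) x := by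
  have hne := exp_sub_one_ne_zero hx
  have hderiv : deriv Phi =ᶠ[𝓝 x] fun y => exp y / (exp y - 1) - 1 / y := by
    filter_upwards [isOpen_ne.mem_nhds hx] with y hy
    exact (hasDerivAt_Phi hy).deriv
  have hfrac := (hasDerivAt_exp x).div ((hasDerivAt_exp x).sub_const 1) hne
  have hinv : HasDerivAt (fun y : ℝ => 1 / y) (-(x ^ 2)⁻¹) x := by
    simpa only [one_div] using hasDerivAt_inv hx
  refine ((hfrac.sub hinv).congr_of_eventuallyEq hderiv).congr_deriv ?_
  rw [two_mul, exp_add]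
  field_simp
  ring

lemma second_deriv_Phi_pos {x : ℝ} (hx : x ≠ 0) :
    0 < (exp (2 * x) - (2 + x ^ 2) * exp x + 1) / (x ^ 2 * (exp x - 1) ^ 2) := by
  have hnum : exp (2 * x) - (2 + x ^ 2) * exp x + 1 = (exp x - 1) ^ 2 - x ^ 2 * exp x := by
    rw [two_mul, exp_add]; ring
  have hden : 0 < x ^ 2 * (exp x - 1) ^ 2 := by
    have := exp_sub_one_ne_zero hx
    positivity
  rw [hnum]
  exact div_pos (sub_pos.mpr (sq_mul_exp_lt_exp_sub_one_sq hx)) hden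

lemma strictConvexOn_Phi {s : Set ℝ} (hs : Convex ℝ s) (h0 : (0 : ℝ) ∉ s) :
    StrictConvexOn ℝ s Phi := by
  have hne : ∀ x ∈ s, x ≠ 0 := fun x hx h => h0 (h ▸ hx)
  refine strictConvexOn_of_deriv2_pos' hs
    (fun x hx => (hasDerivAt_Phi (hne x hx)).continuousAt.continuousWithinAt) fun x hx => ?_
  rw [Function.iterate_succ_apply, Function.iterate_one, (hasDerivAt_deriv_Phi (hne x hx)).deriv]
  exact second_deriv_Phi_pos (hne x hx)

theorem Phi_second_deriv_and_convex :
    (∀ x : ℝ, x ≠ 0 →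
      deriv (deriv Phi) x
        = (Real.exp (2 * x) - (2 + x ^ 2) * Real.exp x + 1)
          / (x ^ 2 * (Real.exp x - 1) ^ 2) ∧
      0 < (Real.exp (2 * x) - (2 + x ^ 2) * Real.exp x + 1)
          / (x ^ 2 * (Real.exp x - 1) ^ 2)) ∧
    StrictConvexOn ℝ (Set.Iio (0 : ℝ)) Phi ∧
    StrictConvexOn ℝ (Set.Ioi (0 : ℝ)) Phi :=
  ⟨fun _ hx => ⟨(hasDerivAt_deriv_Phi hx).deriv, second_deriv_Phi_pos hx⟩,
    strictConvexOn_Phi (convex_Iio 0) Set.self_notMem_Iio,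
    strictConvexOn_Phi (convex_Ioi 0) Set.self_notMem_Ioi⟩
end
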